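/- arXiv:2508.03818 — 6 statements merged into one kernel-verified Lean document; each statement's English description precedes it below -/
import Mathlib

section
/- The MidOrNearest mechanism 3/2-approximates the optimal minimum utility: for all agent locations x_1 ≤ … ≤ x_n in [0,1], the optimal minimum utility 1 - (x_n - x_1)/2 is at most 3/2 times the minimum utility achieved by locating the facility at median(x_1, 1/2, x_n) (i.e., at 1/2 if x_1 ≤ 1/2 ≤ x_n, otherwise at whichever of x_1, x_n is nearest to 1/2). -/
/-- Minimum utility of facility location `y` for agents `x`. -/
noncomputable def minUtil {n : ℕ} (x : Fin (n + 1) → ℝ) (y : ℝ) : ℝ :=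
  Finset.univ.inf' Finset.univ_nonempty (fun i => 1 - |x i - y|)

/-- The MidOrNearest location: median(x1, 1/2, xn) for x1 ≤ xn. -/
noncomputable def midOrNearest (x1 xn : ℝ) : ℝ := max x1 (min (1 / 2) xn)

/-- MidOrNearest 3/2-approximates the optimal minimum utility. -/
theorem stmt_2 (n : ℕ) (x : Fin (n + 1) → ℝ) (hmono : Monotone x)
    (hx : ∀ i, x i ∈ Set.Icc (0 : ℝ) 1) :
    1 - (x (Fin.last n) - x 0) / 2 ≤
      (3 / 2) * minUtil x (midOrNearest (x 0) (x (Fin.last n))) := by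
  set a := x 0 with ha
  set b := x (Fin.last n) with hb
  have hab : a ≤ b := hmono (Fin.zero_le _)
  have ha0 : (0 : ℝ) ≤ a := (hx 0).1
  have hb1 : b ≤ 1 := (hx (Fin.last n)).2
  set y := midOrNearest a b with hy
  have hay : a ≤ y := le_max_left _ _
  have hyb : y ≤ b := max_le hab (min_le_right _ _)
  have hmin : 1 - max (b - y) (y - a) ≤ minUtil x y := by
    apply Finset.le_inf'
    intro i _
    have h1 : a ≤ x i := hmono (Fin.zero_le _)
    have h2 : x i ≤ b := hmono (Fin.le_last _)
    have : |x i - y| ≤ max (b - y) (y - a) := by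
      rcases le_total (x i) y with h | h
      · rw [abs_sub_comm, abs_of_nonneg (by linarith)]
        exact le_max_of_le_right (by linarith)
      · rw [abs_of_nonneg (by linarith)]
        exact le_max_of_le_left (by linarith)
    linarith
  have key : 1 - (b - a) / 2 ≤ 3 / 2 * (1 - max (b - y) (y - a)) := by
    rcases le_total a (1/2) with h1 | h1
    · rcases le_total (1/2 : ℝ) b with h2 | h2
      · have hyv : y = 1/2 := by
          rw [hy, midOrNearest, min_eq_left h2, max_eq_right h1]
        rw [hyv]
        rcases max_cases (b - 1/2) (1/2 - a) with ⟨he, _⟩ | ⟨he, _⟩ <;>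
          rw [he] <;> nlinarith
      · have hyv : y = b := by
          rw [hy, midOrNearest, min_eq_right h2, max_eq_right hab]
        rw [hyv]
        rcases max_cases (b - b) (b - a) with ⟨he, _⟩ | ⟨he, _⟩ <;>
          rw [he] <;> nlinarith
    · have hyv : y = a := by
        rw [hy, midOrNearest]
        rcases le_total (1/2 : ℝ) b with h2 | h2
        · rw [min_eq_left h2, max_eq_left h1]
        · rw [min_eq_right h2, max_eq_left (h2.trans h1)]
      rw [hyv]
      rcases max_cases (b - a) (a - a) with ⟨he, _⟩ | ⟨he, _⟩ <;>
        rw [he] <;> nlinarith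
  calc 1 - (b - a) / 2 ≤ 3 / 2 * (1 - max (b - y) (y - a)) := key
    _ ≤ 3 / 2 * minUtil x y := by linarith
end

section
/- For every γ ∈ [0, 1/2], the truncated prediction mechanism MinMaxP_γ is (2-γ)/(2-2γ)-consistent with respect to minimum utility: if the prediction π equals the optimal facility location (x_1+x_n)/2, then the optimal minimum utility 1 - (x_n-x_1)/2 is at most (2-γ)/(2-2γ) times the minimum utility of the location returned by MinMaxP_γ. -/
/-- The MinMaxP_γ mechanism: truncate the prediction π to [γ, 1-γ]
and return median(x1, π', xn). -/
noncomputable def minmaxPgamma (γ x1 xn π : ℝ) : ℝ :=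
  max x1 (min (max γ (min π (1 - γ))) xn)

lemma minUtil_lower {n : ℕ} (x : Fin (n + 1) → ℝ) (hmono : Monotone x) (y : ℝ)
    (h1 : x 0 ≤ y) (h2 : y ≤ x (Fin.last n)) :
    1 - max (y - x 0) (x (Fin.last n) - y) ≤ minUtil x y := by
  apply Finset.le_inf'
  intro i _
  have hlo : x 0 ≤ x i := hmono (Fin.zero_le i)
  have hhi : x i ≤ x (Fin.last n) := hmono (Fin.le_last i)
  have : |x i - y| ≤ max (y - x 0) (x (Fin.last n) - y) := by
    rw [abs_le]
    constructor
    · have := le_max_left (y - x 0) (x (Fin.last n) - y)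
      linarith
    · have := le_max_right (y - x 0) (x (Fin.last n) - y)
      linarith
  linarith

lemma arith_key (γ a b : ℝ) (hγ0 : 0 ≤ γ) (hγ1 : γ ≤ 1 / 2)
    (ha : 0 ≤ a) (hab : a ≤ b) (hb : b ≤ 1) :
    1 - (b - a) / 2 ≤ (2 - γ) / (2 - 2 * γ) *
      (1 - max (max a (min (max γ (min ((a + b) / 2) (1 - γ))) b) - a)
        (b - max a (min (max γ (min ((a + b) / 2) (1 - γ))) b))) := by
  have hden : (0:ℝ) < 2 - 2 * γ := by linarith
  rw [div_mul_eq_mul_div, le_div_iff₀ hden]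
  rcases le_or_gt γ ((a + b) / 2) with h1 | h1
  · rcases le_or_gt ((a + b) / 2) (1 - γ) with h2 | h2
    · -- π' = π, y = π
      have e1 : min ((a + b) / 2) (1 - γ) = (a + b) / 2 := min_eq_left h2
      have e2 : max γ ((a + b) / 2) = (a + b) / 2 := max_eq_right h1
      have e3 : min ((a + b) / 2) b = (a + b) / 2 := min_eq_left (by linarith)
      have e4 : max a ((a + b) / 2) = (a + b) / 2 := max_eq_right (by linarith)
      have hy : max a (min (max γ (min ((a + b) / 2) (1 - γ))) b) = (a + b) / 2 := by
        rw [e1, e2, e3, e4]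
      rw [hy]
      have hmax : max ((a + b) / 2 - a) (b - (a + b) / 2) = (b - a) / 2 := by
        rw [max_eq_left (by linarith)]; ring
      rw [hmax]
      nlinarith
    · -- π > 1-γ
      have hb1 : 1 - γ ≤ b := by linarith
      have e1 : min ((a + b) / 2) (1 - γ) = 1 - γ := min_eq_right (by linarith)
      have e2 : max γ (1 - γ) = 1 - γ := max_eq_right (by linarith)
      have e3 : min (1 - γ) b = 1 - γ := min_eq_left hb1
      have hy0 : max a (min (max γ (min ((a + b) / 2) (1 - γ))) b) = max a (1 - γ) := by
        rw [e1, e2, e3]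
      rcases le_or_gt a (1 - γ) with h3 | h3
      · have e4 : max a (1 - γ) = 1 - γ := max_eq_right h3
        rw [hy0, e4]
        have hmax : max ((1 - γ) - a) (b - (1 - γ)) = b - (1 - γ) := by
          rw [max_eq_right (by linarith)]
        rw [hmax]
        nlinarith [mul_nonneg (by linarith : (0:ℝ) ≤ 1 - γ - a) (by linarith : (0:ℝ) ≤ 1 - γ)]
      · have e4 : max a (1 - γ) = a := max_eq_left h3.le
        rw [hy0, e4]
        have hmax : max (a - a) (b - a) = b - a := by
          rw [max_eq_right (by linarith)]
        rw [hmax]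
        nlinarith
  · -- π < γ, so π' = γ
    have hπlt : (a + b) / 2 ≤ 1 - γ := by linarith
    have e1 : min ((a + b) / 2) (1 - γ) = (a + b) / 2 := min_eq_left hπlt
    have e2 : max γ ((a + b) / 2) = γ := max_eq_left h1.le
    have hy0 : max a (min (max γ (min ((a + b) / 2) (1 - γ))) b) = max a (min γ b) := by
      rw [e1, e2]
    rcases le_or_gt γ b with h3 | h3
    · have e4 : min γ b = γ := min_eq_left h3
      have e5 : max a γ = γ := max_eq_right (by linarith)
      rw [hy0, e4, e5]
      have hmax : max (γ - a) (b - γ) = γ - a := by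
        rw [max_eq_left (by linarith)]
      rw [hmax]
      nlinarith [mul_nonneg (by linarith : (0:ℝ) ≤ b - γ) (by linarith : (0:ℝ) ≤ 1 - γ)]
    · have e4 : min γ b = b := min_eq_right h3.le
      have e5 : max a b = b := max_eq_right hab
      rw [hy0, e4, e5]
      have hmax : max (b - a) (b - b) = b - a := by
        rw [max_eq_left (by linarith)]
      rw [hmax]
      nlinarith

/-- MinMaxP_γ is (2-γ)/(2-2γ)-consistent with respect to minimum utility. -/
theorem stmt_4 (γ : ℝ) (hγ : γ ∈ Set.Icc (0 : ℝ) (1 / 2))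
    (n : ℕ) (x : Fin (n + 1) → ℝ) (hmono : Monotone x)
    (hx : ∀ i, x i ∈ Set.Icc (0 : ℝ) 1)
    (π : ℝ) (hπ : π = (x 0 + x (Fin.last n)) / 2) :
    1 - (x (Fin.last n) - x 0) / 2 ≤
      ((2 - γ) / (2 - 2 * γ)) *
        minUtil x (minmaxPgamma γ (x 0) (x (Fin.last n)) π) := by
  obtain ⟨hγ0, hγ1⟩ := hγ
  set a := x 0 with hadef
  set b := x (Fin.last n) with hbdef
  have ha0 : 0 ≤ a := (hx 0).1
  have hb1 : b ≤ 1 := (hx (Fin.last n)).2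
  have hab : a ≤ b := hmono (Fin.zero_le _)
  set y := minmaxPgamma γ a b π with hy
  have hy1 : a ≤ y := le_max_left _ _
  have hy2 : y ≤ b := max_le hab (min_le_right _ _)
  have hlow := minUtil_lower x hmono y hy1 hy2
  have hc : 0 ≤ (2 - γ) / (2 - 2 * γ) :=
    div_nonneg (by linarith) (by linarith)
  have key := arith_key γ a b hγ0 hγ1 ha0 hab hb1
  rw [← hπ] at key
  calc 1 - (b - a) / 2 ≤ (2 - γ) / (2 - 2 * γ) *
        (1 - max (y - a) (b - y)) := key
    _ ≤ (2 - γ) / (2 - 2 * γ) * minUtil x y := by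
        exact mul_le_mul_of_nonneg_left hlow hc
end

section
/- For every γ ∈ (0, 1/2], the truncated prediction mechanism MinMaxP_γ is (1+γ)/(2γ)-robust with respect to minimum utility: for all agent locations x_1 ≤ … ≤ x_n in [0,1] and all predictions π ∈ [0,1], the optimal minimum utility 1 - (x_n - x_1)/2 is at most (1+γ)/(2γ) times the minimum utility of the location returned by MinMaxP_γ(x_1, x_n, π). -/
/-- MinMaxP_γ is (1+γ)/(2γ)-robust with respect to minimum utility for γ ∈ (0, 1/2]. -/
theorem stmt_5 (γ : ℝ) (hγ : γ ∈ Set.Ioc (0 : ℝ) (1 / 2))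
    (n : ℕ) (x : Fin (n + 1) → ℝ) (hmono : Monotone x)
    (hx : ∀ i, x i ∈ Set.Icc (0 : ℝ) 1)
    (π : ℝ) (hπ : π ∈ Set.Icc (0 : ℝ) 1) :
    1 - (x (Fin.last n) - x 0) / 2 ≤
      ((1 + γ) / (2 * γ)) *
        minUtil x (minmaxPgamma γ (x 0) (x (Fin.last n)) π) := by
  obtain ⟨hγ0, hγ2⟩ := hγ
  set a := x 0 with ha
  set b := x (Fin.last n) with hb
  have hab : a ≤ b := hmono (Fin.zero_le _)
  have ha0 : 0 ≤ a := (hx 0).1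
  have hb1 : b ≤ 1 := (hx (Fin.last n)).2
  set π' := max γ (min π (1 - γ)) with hπ'
  have hπ'γ : γ ≤ π' := le_max_left _ _
  have hπ'1 : π' ≤ 1 - γ := by
    apply max_le (by linarith) (min_le_right _ _)
  set y := minmaxPgamma γ a b π with hy
  have hyeq : y = max a (min π' b) := rfl
  have hay : a ≤ y := le_max_left _ _
  have hyb : y ≤ b := by
    rw [hyeq]; exact max_le hab (min_le_right _ _)
  set m := max (y - a) (b - y) with hm
  have hmd : m ≤ b - a := max_le (by linarith) (by linarith)
  have hm1 : m ≤ 1 - γ := by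
    apply max_le
    · rcases le_or_gt (min π' b) a with h | h
      · have : y = a := by rw [hyeq, max_eq_left h]
        linarith
      · have : y = min π' b := by rw [hyeq, max_eq_right h.le]
        have : y ≤ π' := this ▸ min_le_left _ _
        linarith
    · rcases le_total b π' with h | h
      · have : min π' b = b := min_eq_right h
        have : b ≤ y := by rw [hyeq, this]; exact le_max_right _ _
        linarith
      · have : min π' b = π' := min_eq_left h
        have : π' ≤ y := by rw [hyeq, this]; exact le_max_right _ _
        linarith
  have hmin : 1 - m ≤ minUtil x y := by
    apply Finset.le_inf'
    intro i _
    have h1 : a ≤ x i := hmono (Fin.zero_le i)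
    have h2 : x i ≤ b := hmono (Fin.le_last i)
    have : |x i - y| ≤ m := by
      apply abs_le.mpr
      constructor
      · have := le_max_left (y - a) (b - y); linarith
      · have := le_max_right (y - a) (b - y); linarith
    linarith
  have key : 1 - (b - a) / 2 ≤ ((1 + γ) / (2 * γ)) * (1 - m) := by
    rw [div_mul_eq_mul_div, le_div_iff₀ (by linarith)]
    nlinarith [mul_nonneg hγ0.le (sub_nonneg.mpr hmd)]
  calc 1 - (b - a) / 2 ≤ ((1 + γ) / (2 * γ)) * (1 - m) := key
    _ ≤ ((1 + γ) / (2 * γ)) * minUtil x y := by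
        apply mul_le_mul_of_nonneg_left hmin
        positivity
end

section
/- Among generalized median mechanisms with n-1 phantom locations on [0,1], any mechanism that has at least one phantom not equal to 1/2 has approximation ratio strictly worse than 3/2 with respect to the minimum utility. Concretely, if a phantom a satisfies 0 ≤ a < 1/2, then on the instance with n-1 agents at a and one agent at 1, the mechanism locates the facility at a, giving approximation ratio (1+a)/(2a) > 3/2 (and the ratio is unbounded when a = 0). -/
/-- The median of a multiset of reals (of odd cardinality 2m+1 this is the
(m+1)-th smallest element). -/
noncomputable def medianOf (s : Multiset ℝ) : ℝ :=
  (s.sort (· ≤ ·)).getD (s.card / 2) 0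

theorem List.getD_eq_of_pairwise_le_of_lt_count {α : Type*} [LinearOrder α] {l : List α}
    (hl : l.Pairwise (· ≤ ·)) {a : α} (ha : ∀ b ∈ l, a ≤ b) {k : ℕ} (hk : k < l.count a)
    (d : α) : l.getD k d = a := by
  have hkl : k < l.length := hk.trans_le List.count_le_length
  rw [List.getD_eq_getElem _ _ hkl]
  refine le_antisymm ?_ (ha _ (List.getElem_mem hkl))
  by_contra! hlt
  have hdrop : (l.drop k).count a = 0 := by
    refine List.count_eq_zero.mpr fun hmem => ?_
    obtain ⟨i, hi, hget⟩ := List.mem_iff_getElem.mp hmem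
    rw [List.length_drop] at hi
    have : l[k] ≤ l[k + i] := hl.rel_get_of_le (Nat.le_add_right k i)
    rw [List.getElem_drop] at hget
    exact (hget ▸ this).not_gt hlt
  have htake : (l.take k).count a ≤ k := List.count_le_length.trans (List.length_take_le k l)
  have hsplit := List.count_append (a := a) (l₁ := l.take k) (l₂ := l.drop k)
  rw [List.take_append_drop] at hsplit
  omega

theorem medianOf_eq_of_forall_le_of_lt_count {s : Multiset ℝ} {a : ℝ} (ha : ∀ b ∈ s, a ≤ b)
    (hcount : s.card / 2 < s.count a) : medianOf s = a := by
  have hsort : (s.sort (· ≤ ·)).count a = s.count a := by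
    rw [← Multiset.coe_count, Multiset.sort_eq]
  exact List.getD_eq_of_pairwise_le_of_lt_count (Multiset.pairwise_sort _ _)
    (fun b hb => ha b ((Multiset.mem_sort _).mp hb)) (hsort ▸ hcount) 0

theorem minUtil_eq_of_forall_abs_sub_le {n : ℕ} {x : Fin (n + 1) → ℝ} {y : ℝ} (i₀ : Fin (n + 1))
    (h : ∀ i, |x i - y| ≤ |x i₀ - y|) : minUtil x y = 1 - |x i₀ - y| :=
  le_antisymm (Finset.inf'_le _ (Finset.mem_univ i₀))
    (Finset.le_inf' _ _ fun i _ => by linarith [h i])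

theorem minUtil_eq_of_forall_ne_last_eq {n : ℕ} {x : Fin (n + 2) → ℝ} {a b : ℝ}
    (hx : ∀ i, i ≠ Fin.last (n + 1) → x i = a) (hlast : x (Fin.last (n + 1)) = b) (hab : a ≤ b) :
    minUtil x a = 1 - (b - a) := by
  have hfar : |x (Fin.last (n + 1)) - a| = b - a := by
    rw [hlast, abs_of_nonneg (sub_nonneg.mpr hab)]
  have hfarthest : ∀ i, |x i - a| ≤ |x (Fin.last (n + 1)) - a| := by
    intro i
    rcases eq_or_ne i (Fin.last (n + 1)) with rfl | hi
    · exact le_rfl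
    · rw [hx i hi, sub_self, abs_zero, hfar]
      exact sub_nonneg.mpr hab
  rw [minUtil_eq_of_forall_abs_sub_le _ hfarthest, hfar]

theorem univ_val_map_eq_cons_replicate {α : Type*} {n : ℕ} {x : Fin (n + 2) → α} {a b : α}
    (hx : ∀ i, i ≠ Fin.last (n + 1) → x i = a) (hlast : x (Fin.last (n + 1)) = b) :
    Finset.univ.val.map x = b ::ₘ Multiset.replicate (n + 1) a := by
  have hinit : (fun i : Fin (n + 1) => x i.castSucc) = fun _ => a :=
    funext fun i => hx _ (Fin.castSucc_lt_last i).ne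
  rw [Fin.univ_val_map, List.ofFn_succ', hinit, List.ofFn_const, hlast, List.concat_eq_append,
    ← Multiset.coe_add, Multiset.coe_replicate, Multiset.coe_singleton, Multiset.add_comm,
    Multiset.singleton_add]

theorem stmt_8_general (n : ℕ) (z : Fin (n + 1) → ℝ)
    (a : ℝ) (j : Fin (n + 1)) (hja : z j = a)
    (ha : 0 ≤ a ∧ a < 1 / 2) (hmin : ∀ k, a ≤ z k)
    (x : Fin (n + 2) → ℝ)
    (hx : ∀ i : Fin (n + 2), i ≠ Fin.last (n + 1) → x i = a)
    (hlast : x (Fin.last (n + 1)) = 1) :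
    medianOf (Finset.univ.val.map x + Finset.univ.val.map z) = a ∧
    minUtil x (medianOf (Finset.univ.val.map x + Finset.univ.val.map z)) = a ∧
    1 - (x (Fin.last (n + 1)) - x 0) / 2 = (1 + a) / 2 ∧
    (3 / 2) * minUtil x (medianOf (Finset.univ.val.map x + Finset.univ.val.map z))
      < (1 + a) / 2 := by
  have hagents := univ_val_map_eq_cons_replicate hx hlast
  have hmed : medianOf (Finset.univ.val.map x + Finset.univ.val.map z) = a := by
    refine medianOf_eq_of_forall_le_of_lt_count ?_ ?_
    · simp only [hagents, Multiset.cons_add, Multiset.mem_cons, Multiset.mem_add,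
        Multiset.mem_replicate, Multiset.mem_map, Finset.mem_val, Finset.mem_univ, true_and]
      rintro b (rfl | ⟨-, rfl⟩ | ⟨k, rfl⟩)
      · linarith [ha.2]
      · exact le_rfl
      · exact hmin k
    · have hphantom : 1 ≤ (Finset.univ.val.map z).count a :=
        Multiset.one_le_count_iff_mem.mpr (hja ▸ Multiset.mem_map_of_mem z (Finset.mem_univ_val j))
      simp only [hagents, Multiset.card_add, Multiset.card_cons, Multiset.card_replicate,
        Multiset.card_map, Finset.card_val, Finset.card_univ, Fintype.card_fin,
        Multiset.count_add, Multiset.count_cons, Multiset.count_replicate_self]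
      omega
  have hutil : minUtil x a = a := by
    rw [minUtil_eq_of_forall_ne_last_eq hx hlast (by linarith [ha.2])]
    ring
  have hx0 : x 0 = a := hx 0 Fin.last_pos.ne
  refine ⟨hmed, by rw [hmed, hutil], by rw [hlast, hx0]; ring, ?_⟩
  rw [hmed, hutil]
  linarith [ha.2]

/-- A generalized median mechanism with a phantom `a` ≠ 1/2, say 0 ≤ a < 1/2 and
`a` the smallest phantom: on the instance with n agents at `a` and one agent at 1,
the facility is located at `a`, the achieved minimum utility is `a`, the optimal
minimum utility is (1+a)/2, and the approximation ratio is worse than 3/2. -/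
theorem stmt_8 (n : ℕ) (z : Fin (n + 1) → ℝ) (hz : ∀ j, z j ∈ Set.Icc (0 : ℝ) 1)
    (a : ℝ) (j : Fin (n + 1)) (hja : z j = a)
    (ha : 0 ≤ a ∧ a < 1 / 2) (hmin : ∀ k, a ≤ z k)
    (x : Fin (n + 2) → ℝ)
    (hx : ∀ i : Fin (n + 2), i ≠ Fin.last (n + 1) → x i = a)
    (hlast : x (Fin.last (n + 1)) = 1) :
    medianOf (Finset.univ.val.map x + Finset.univ.val.map z) = a ∧
    minUtil x (medianOf (Finset.univ.val.map x + Finset.univ.val.map z)) = a ∧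
    1 - (x (Fin.last (n + 1)) - x 0) / 2 = (1 + a) / 2 ∧
    (3 / 2) * minUtil x (medianOf (Finset.univ.val.map x + Finset.univ.val.map z))
      < (1 + a) / 2 :=
  stmt_8_general n z a j hja ha hmin x hx hlast
end

section
/- The LRM mechanism 2-approximates the optimal minimum utility in expectation in the worst case: for agent locations x_1 ≤ … ≤ x_n in [0,1], letting d = (x_n - x_1)/2, the expected minimum utility of LRM (which locates the facility at x_1 with probability 1/4, at (x_1+x_n)/2 with probability 1/2, and at x_n with probability 1/4) equals (1/2)(1-d) + (1/2)(1-2d) = 1 - (3/2)d, and the ratio (1-d)/(1 - (3/2)d) is at most 2 for all d ∈ [0, 1/2], with the bound 2 attained as d → 1/2. -/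
lemma minUtil_eq {n : ℕ} (x : Fin (n + 1) → ℝ) (y m : ℝ)
    (h1 : ∀ i, |x i - y| ≤ m) (j : Fin (n + 1)) (h2 : |x j - y| = m) :
    minUtil x y = 1 - m := by
  apply le_antisymm
  · calc minUtil x y ≤ 1 - |x j - y| := Finset.inf'_le _ (Finset.mem_univ j)
    _ = 1 - m := by rw [h2]
  · apply Finset.le_inf'
    intro i _
    linarith [h1 i]

/-- The LRM mechanism 2-approximates the optimal minimum utility in expectation:
its expected minimum utility is 1 - (3/2)d where d = (xₙ-x₁)/2, the ratio
(1-d)/(1-(3/2)d) is at most 2 for d ∈ [0,1/2], with equality at d = 1/2. -/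
theorem stmt_10 (n : ℕ) (x : Fin (n + 1) → ℝ) (hmono : Monotone x)
    (hx : ∀ i, x i ∈ Set.Icc (0 : ℝ) 1) :
    ((1 / 4) * minUtil x (x 0) +
        (1 / 2) * minUtil x ((x 0 + x (Fin.last n)) / 2) +
        (1 / 4) * minUtil x (x (Fin.last n)) =
      1 - (3 / 2) * ((x (Fin.last n) - x 0) / 2)) ∧
    (∀ d ∈ Set.Icc (0 : ℝ) (1 / 2),
      1 - d ≤ 2 * (1 - (3 / 2) * d) ∧ (d = 1 / 2 → 1 - d = 2 * (1 - (3 / 2) * d))) := by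
  have h0 : ∀ i, x 0 ≤ x i := fun i => hmono (Fin.zero_le i)
  have hn : ∀ i, x i ≤ x (Fin.last n) := fun i => hmono (Fin.le_last i)
  constructor
  · have e1 : minUtil x (x 0) = 1 - (x (Fin.last n) - x 0) := by
      refine minUtil_eq x _ _ ?_ (Fin.last n) ?_
      · intro i
        rw [abs_of_nonneg (by linarith [h0 i])]
        linarith [hn i]
      · rw [abs_of_nonneg (by linarith [h0 (Fin.last n)])]
    have e2 : minUtil x ((x 0 + x (Fin.last n)) / 2) = 1 - (x (Fin.last n) - x 0) / 2 := by
      refine minUtil_eq x _ _ ?_ (Fin.last n) ?_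
      · intro i
        rw [abs_le]
        constructor <;> linarith [h0 i, hn i]
      · rw [abs_of_nonneg (by linarith [h0 (Fin.last n)])]
        ring
    have e3 : minUtil x (x (Fin.last n)) = 1 - (x (Fin.last n) - x 0) := by
      refine minUtil_eq x _ _ ?_ 0 ?_
      · intro i
        rw [abs_of_nonpos (by linarith [hn i])]
        linarith [h0 i]
      · rw [abs_of_nonpos (by linarith [hn 0])]
        ring
    rw [e1, e2, e3]; ring
  · intro d hd
    obtain ⟨hd0, hd1⟩ := hd
    constructor
    · linarith
    · intro h; rw [h]; norm_num
end

section
/- The MinMaxP mechanism is 1-consistent and 2-robust with respect to the maximum distance: for all x_1 ≤ x_n in [0,1] and all π ∈ [0,1], if π = (x_1+x_n)/2 then the returned location achieves exactly the optimal maximum distance (x_n-x_1)/2; and for arbitrary π, the returned location y = median(x_1, π, x_n) satisfies max(|x_1 - y|, |x_n - y|) ≤ 2·(x_n - x_1)/2 = x_n - x_1. -/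
/-- The MinMaxP mechanism: returns π if x1 ≤ π ≤ xn, x1 if π < x1, xn if π > xn
(equivalently the median of x1, π, xn when x1 ≤ xn). -/
noncomputable def minmaxP (x1 xn π : ℝ) : ℝ := max x1 (min π xn)

/-- MinMaxP is 1-consistent and 2-robust with respect to maximum distance. -/
theorem stmt_19 (x1 xn π : ℝ) (hx1 : x1 ∈ Set.Icc (0 : ℝ) 1)
    (hxn : xn ∈ Set.Icc (0 : ℝ) 1) (hle : x1 ≤ xn) (hπ : π ∈ Set.Icc (0 : ℝ) 1) :
    (π = (x1 + xn) / 2 →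
      max |x1 - minmaxP x1 xn π| |xn - minmaxP x1 xn π| = (xn - x1) / 2) ∧
    max |x1 - minmaxP x1 xn π| |xn - minmaxP x1 xn π| ≤ 2 * ((xn - x1) / 2) := by
  have hy1 : x1 ≤ minmaxP x1 xn π := le_max_left _ _
  have hyn : minmaxP x1 xn π ≤ xn := max_le hle (min_le_right _ _)
  have h1 : |x1 - minmaxP x1 xn π| = minmaxP x1 xn π - x1 := by
    rw [abs_sub_comm]; exact abs_of_nonneg (by linarith)
  have h2 : |xn - minmaxP x1 xn π| = xn - minmaxP x1 xn π := abs_of_nonneg (by linarith)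
  constructor
  · intro hm
    have : minmaxP x1 xn π = π := by
      unfold minmaxP
      rw [min_eq_left (by linarith), max_eq_right (by linarith)]
    rw [h1, h2, this, hm]
    rw [max_eq_left (by linarith)] <;> ring_nf <;> linarith
  · rw [h1, h2]
    apply max_le <;> linarith
end
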